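/- Let H be a Hopf algebra with antipode S over a field k, let I be a left ideal coideal of H, and let π : H → C = H/I be the quotient coalgebra map. Then for y ∈ H, the condition Δ(y) − y ⊗ 1 ∈ H ⊗ I is equivalent to (id ⊗ S)Δ(y) − y ⊗ 1 ∈ H ⊗ I. Consequently, the subalgebra of right C-coinvariants {y ∈ H : (id ⊗ π)Δ(y) = y ⊗ π(1)} equals the corresponding coinvariants for H/S⁻¹(I). -/
import Mathlib


open TensorProduct LinearMap Coalgebra HopfAlgebra

/-- A subspace `I` of `H` is a coideal: `Δ(I) ⊆ I ⊗ H + H ⊗ I` and `ε(I) = 0`. -/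
def IsCoideal (k H : Type*) [CommRing k] [Ring H] [HopfAlgebra k H]
    (I : Submodule k H) : Prop :=
  (∀ x ∈ I, Coalgebra.comul x ∈
      LinearMap.range (TensorProduct.mapIncl I (⊤ : Submodule k H)) ⊔
        LinearMap.range (TensorProduct.mapIncl (⊤ : Submodule k H) I)) ∧
    ∀ x ∈ I, Coalgebra.counit (R := k) x = 0

/-- The subspace `H ⊗ I` of `H ⊗ H`. -/
noncomputable def HtensorI (k H : Type*) [CommRing k] [Ring H] [HopfAlgebra k H]
    (I : Submodule k H) : Submodule k (H ⊗[k] H) :=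
  LinearMap.range (TensorProduct.mapIncl (⊤ : Submodule k H) I)

/-- The subalgebra of right coinvariants of `H` for the factor coalgebra `H/I`,
described by the condition `(id ⊗ π)Δ(y) = y ⊗ π(1)` where `π : H → H/I`. -/
noncomputable def rightCoinvariants (k H : Type*) [CommRing k] [Ring H] [HopfAlgebra k H]
    (I : Submodule k H) : Set H :=
  {y : H | LinearMap.lTensor H I.mkQ (Coalgebra.comul y) = y ⊗ₜ[k] I.mkQ 1}

section Aux

variable {k H : Type*} [Field k] [Ring H] [HopfAlgebra k H]

/-- Over a field, the kernel of `id_H ⊗ f` is `H ⊗ ker f`. -/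
lemma ker_lTensor_eq {M : Type*} [AddCommGroup M] [Module k M] (f : H →ₗ[k] M) :
    ker (lTensor H f) = HtensorI k H (ker f) := by
  rw [(Module.Flat.lTensor_exact H (LinearMap.exact_subtype_ker_map f)).linearMap_ker_eq]
  apply le_antisymm
  · rintro _ ⟨y, rfl⟩
    induction y using TensorProduct.induction_on with
    | zero => simp only [map_zero]; exact Submodule.zero_mem _
    | tmul a b => exact ⟨(⟨a, trivial⟩ : (⊤ : Submodule k H)) ⊗ₜ b, rfl⟩
    | add y z hy hz => rw [map_add]; exact Submodule.add_mem _ hy hz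
  · rintro _ ⟨y, rfl⟩
    induction y using TensorProduct.induction_on with
    | zero => simp only [map_zero]; exact Submodule.zero_mem _
    | tmul a b => exact ⟨a.1 ⊗ₜ b, rfl⟩
    | add y z hy hz => rw [map_add]; exact Submodule.add_mem _ hy hz

lemma ker_lTensor_mkQ (I : Submodule k H) :
    ker (lTensor H I.mkQ) = HtensorI k H I := by
  rw [ker_lTensor_eq, Submodule.ker_mkQ]

/-- Membership in the right coinvariants expressed via `H ⊗ I`. -/
lemma mem_rightCoinvariants_iff (I : Submodule k H) (y : H) :
    y ∈ rightCoinvariants k H I ↔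
      Coalgebra.comul y - y ⊗ₜ[k] (1 : H) ∈ HtensorI k H I := by
  rw [← ker_lTensor_mkQ, mem_ker, map_sub, sub_eq_zero, lTensor_tmul]
  rfl

/-- `chi g (u ⊗ v) = Σ u₁ ⊗ g(u₂ ⊗ v)`. -/
noncomputable def chi (g : H ⊗[k] H →ₗ[k] H) : H ⊗[k] H →ₗ[k] H ⊗[k] H :=
  lTensor H g ∘ₗ (TensorProduct.assoc k H H H).toLinearMap ∘ₗ
    rTensor H (Coalgebra.comul (R := k))

lemma chi_tmul (g : H ⊗[k] H →ₗ[k] H) (u v : H) :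
    chi g (u ⊗ₜ[k] v) =
      lTensor H g ((TensorProduct.assoc k H H H).toLinearMap
        ((Coalgebra.comul u) ⊗ₜ[k] v)) := rfl

/-- If `g(Δx) = ε(x)1` then `chi g (Δ y) = y ⊗ 1`. -/
lemma chi_comul (g : H ⊗[k] H →ₗ[k] H)
    (hg : g ∘ₗ Coalgebra.comul = Algebra.linearMap k H ∘ₗ Coalgebra.counit) (y : H) :
    chi g (Coalgebra.comul y) = y ⊗ₜ[k] (1 : H) := by
  have : chi g ∘ₗ (Coalgebra.comul (R := k) (A := H)) = (TensorProduct.mk k H H).flip 1 := by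
    unfold chi
    rw [comp_assoc, comp_assoc, Coalgebra.coassoc, ← comp_assoc, ← lTensor_comp, hg,
      lTensor_comp, comp_assoc, Coalgebra.lTensor_counit_comp_comul]
    ext x
    simp
  exact LinearMap.congr_fun this y

/-- `chi g` preserves `H ⊗ I` when `g` maps `H ⊗ I` into `I`. -/
lemma chi_mem (g : H ⊗[k] H →ₗ[k] H) (I : Submodule k H)
    (hgI : ∀ a : H, ∀ b ∈ I, g (a ⊗ₜ[k] b) ∈ I)
    {x : H ⊗[k] H} (hx : x ∈ HtensorI k H I) : chi g x ∈ HtensorI k H I := by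
  obtain ⟨y, rfl⟩ := hx
  induction y using TensorProduct.induction_on with
  | zero => simp only [map_zero]; exact Submodule.zero_mem _
  | add y z hy hz => rw [map_add, map_add]; exact Submodule.add_mem _ hy hz
  | tmul a b =>
    show chi g ((a : H) ⊗ₜ[k] (b : H)) ∈ _
    rw [chi_tmul]
    have key : ∀ t : H ⊗[k] H,
        lTensor H g ((TensorProduct.assoc k H H H).toLinearMap (t ⊗ₜ[k] (b : H))) ∈
          HtensorI k H I := by
      intro t
      induction t using TensorProduct.induction_on with
      | zero => rw [zero_tmul, map_zero, map_zero]; exact Submodule.zero_mem _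
      | add s t hs ht => rw [add_tmul, map_add, map_add]; exact Submodule.add_mem _ hs ht
      | tmul c d =>
        exact ⟨(⟨c, trivial⟩ : (⊤ : Submodule k H)) ⊗ₜ ⟨g (d ⊗ₜ b), hgI d b b.2⟩, rfl⟩
    exact key _

/-- The map `φ(u ⊗ v) = Σ u₁ ⊗ u₂v`. -/
noncomputable def phiM : H ⊗[k] H →ₗ[k] H ⊗[k] H := chi (LinearMap.mul' k H)

/-- The map `ψ(u ⊗ v) = Σ u₁ ⊗ S(u₂)v`. -/
noncomputable def psiM : H ⊗[k] H →ₗ[k] H ⊗[k] H :=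
  chi (LinearMap.mul' k H ∘ₗ rTensor H (antipode (R := k)))

/-- `ψ(u ⊗ v) = (id ⊗ (·v)) ((id ⊗ S)(Δ u))`. -/
lemma psiM_tmul (u v : H) :
    psiM (u ⊗ₜ[k] v) =
      lTensor H (LinearMap.mulRight k v) (lTensor H (antipode (R := k))
        (Coalgebra.comul u)) := by
  rw [psiM, chi_tmul]
  induction (Coalgebra.comul (R := k) u) using TensorProduct.induction_on with
  | zero => rw [zero_tmul, map_zero, map_zero, map_zero, map_zero]
  | add s t hs ht => rw [add_tmul, map_add, map_add, map_add, map_add, hs, ht]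
  | tmul a b => simp

/-- `φ ∘ (id ⊗ S) = chi (m ∘ (id ⊗ S))`. -/
lemma phiM_lTensor_antipode (t : H ⊗[k] H) :
    phiM (lTensor H (antipode (R := k)) t) =
      chi (LinearMap.mul' k H ∘ₗ lTensor H (antipode (R := k))) t := by
  induction t using TensorProduct.induction_on with
  | zero => simp
  | add s t hs ht => rw [map_add, map_add, map_add, hs, ht]
  | tmul a b =>
    rw [lTensor_tmul, phiM, chi_tmul, chi_tmul]
    induction (Coalgebra.comul (R := k) a) using TensorProduct.induction_on with
    | zero => simp only [zero_tmul, map_zero]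
    | add s t hs ht =>
        rw [add_tmul, add_tmul, map_add, map_add, map_add, map_add, hs, ht]
    | tmul c d => simp

/-- `φ` commutes with right multiplication in the second factor. -/
lemma phiM_lTensor_mulRight (v : H) (t : H ⊗[k] H) :
    phiM (lTensor H (LinearMap.mulRight k v) t) =
      lTensor H (LinearMap.mulRight k v) (phiM t) := by
  induction t using TensorProduct.induction_on with
  | zero => simp
  | add s t hs ht => rw [map_add, map_add, map_add, map_add, hs, ht]
  | tmul a b =>
    rw [lTensor_tmul, phiM, chi_tmul, chi_tmul]
    induction (Coalgebra.comul (R := k) a) using TensorProduct.induction_on with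
    | zero => simp only [zero_tmul, map_zero]
    | add s t hs ht =>
        rw [add_tmul, add_tmul, map_add, map_add, map_add, map_add, map_add, hs, ht]
    | tmul c d => simp [mul_assoc]

/-- `ψ(Δ y) = y ⊗ 1`. -/
lemma psiM_comul (y : H) : psiM (Coalgebra.comul y) = y ⊗ₜ[k] (1 : H) := by
  refine chi_comul _ ?_ y
  rw [comp_assoc]
  exact HopfAlgebra.mul_antipode_rTensor_comul

/-- `φ((id ⊗ S)(Δ y)) = y ⊗ 1`. -/
lemma phiM_lTensor_antipode_comul (y : H) :
    phiM (lTensor H (antipode (R := k)) (Coalgebra.comul y)) = y ⊗ₜ[k] (1 : H) := by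
  rw [phiM_lTensor_antipode]
  refine chi_comul _ ?_ y
  rw [comp_assoc]
  exact HopfAlgebra.mul_antipode_lTensor_comul

/-- `φ ∘ ψ = id`. -/
lemma phiM_psiM (x : H ⊗[k] H) : phiM (psiM x) = x := by
  induction x using TensorProduct.induction_on with
  | zero => simp
  | add s t hs ht => rw [map_add, map_add, hs, ht]
  | tmul u v =>
    rw [psiM_tmul, phiM_lTensor_mulRight, phiM_lTensor_antipode_comul, lTensor_tmul]
    simp

/-- `ψ(y ⊗ 1) = (id ⊗ S)(Δ y)`. -/
lemma psiM_tmul_one (y : H) :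
    psiM (y ⊗ₜ[k] (1 : H)) = lTensor H (antipode (R := k)) (Coalgebra.comul y) := by
  rw [psiM_tmul]
  induction (lTensor H (antipode (R := k)) (Coalgebra.comul (R := k) y)) using
      TensorProduct.induction_on with
  | zero => rw [map_zero]
  | add s t hs ht => rw [map_add, hs, ht]
  | tmul a b => simp

lemma antipode_one' : (antipode (R := k) (A := H)) 1 = 1 := by
  have := HopfAlgebra.mul_antipode_rTensor_comul_apply (R := k) (A := H) 1
  rw [Bialgebra.comul_one, Algebra.TensorProduct.one_def] at this
  simpa using this

end Aux

/-- Let `I` be a left ideal coideal of a Hopf algebra `H` over a field `k`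
with antipode `S`. For `y ∈ H`, `Δ(y) − y ⊗ 1 ∈ H ⊗ I` iff
`(id ⊗ S)Δ(y) − y ⊗ 1 ∈ H ⊗ I`; consequently the right coinvariants of `H/I`
coincide with the right coinvariants of `H/S⁻¹(I)`. -/
theorem comul_sub_mem_iff_lTensor_antipode_and_coinvariants_eq
    (k H : Type*) [Field k] [Ring H] [HopfAlgebra k H]
    (I : Submodule k H)
    (hleft : ∀ (h : H), ∀ x ∈ I, h * x ∈ I)
    (hcoideal : IsCoideal k H I) :
    (∀ y : H,
        Coalgebra.comul y - y ⊗ₜ[k] (1 : H) ∈ HtensorI k H I ↔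
          LinearMap.lTensor H (antipode (R := k)) (Coalgebra.comul y) - y ⊗ₜ[k] (1 : H) ∈
            HtensorI k H I) ∧
      rightCoinvariants k H I = rightCoinvariants k H (I.comap (antipode (R := k))) := by
  -- both φ and ψ preserve H ⊗ I, since I is a left ideal
  have hphi : ∀ {x : H ⊗[k] H}, x ∈ HtensorI k H I → phiM x ∈ HtensorI k H I := by
    intro x hx
    exact chi_mem _ I (fun a b hb => by simpa using hleft a b hb) hx
  have hpsi : ∀ {x : H ⊗[k] H}, x ∈ HtensorI k H I → psiM x ∈ HtensorI k H I := by
    intro x hx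
    exact chi_mem _ I (fun a b hb => by simpa using hleft (antipode (R := k) a) b hb) hx
  -- ψ(Δy − y⊗1) = y⊗1 − (id⊗S)Δy
  have hkey : ∀ y : H, psiM (Coalgebra.comul y - y ⊗ₜ[k] (1 : H)) =
      y ⊗ₜ[k] (1 : H) - lTensor H (antipode (R := k)) (Coalgebra.comul y) := by
    intro y
    rw [map_sub, psiM_comul, psiM_tmul_one]
  have main : ∀ y : H,
      Coalgebra.comul y - y ⊗ₜ[k] (1 : H) ∈ HtensorI k H I ↔
        LinearMap.lTensor H (antipode (R := k)) (Coalgebra.comul y) - y ⊗ₜ[k] (1 : H) ∈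
          HtensorI k H I := by
    intro y
    constructor
    · intro h
      have := hpsi h
      rw [hkey] at this
      simpa using Submodule.neg_mem _ this
    · intro h
      have h' : psiM (Coalgebra.comul y - y ⊗ₜ[k] (1 : H)) ∈ HtensorI k H I := by
        rw [hkey]
        simpa using Submodule.neg_mem _ h
      have := hphi h'
      rwa [phiM_psiM] at this
  refine ⟨main, ?_⟩
  ext y
  rw [mem_rightCoinvariants_iff, mem_rightCoinvariants_iff]
  -- rewrite the right condition via the kernel of id ⊗ (π ∘ S)
  have hker : HtensorI k H (I.comap (antipode (R := k))) =
      ker (lTensor H (I.mkQ ∘ₗ antipode (R := k))) := by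
    rw [ker_lTensor_eq, ker_comp, Submodule.ker_mkQ]
  rw [hker, mem_ker, lTensor_comp, comp_apply, map_sub, lTensor_tmul, antipode_one',
    ← mem_ker (f := lTensor H I.mkQ), ker_lTensor_mkQ]
  exact main y
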